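/- arXiv:2604.07216 — 2 statements merged into one kernel-verified Lean document; each statement's English description precedes it below -/
import Mathlib

section
/- Let X be a real Hilbert space and ψ₁, ψ₂ : X → (−∞,+∞] proper, closed, convex functions with common effective domain D. Suppose there exists L ≥ 0 such that |(ψ₁(z₁) − ψ₂(z₁)) − (ψ₁(z₂) − ψ₂(z₂))| ≤ L‖z₁ − z₂‖ for all z₁, z₂ ∈ D. Then for any z ∈ X and t > 0, ‖prox_{tψ₁}(z) − prox_{tψ₂}(z)‖ ≤ t L. -/
noncomputable section

/-- A function into the extended reals is proper if it never takes the value `-∞`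
and is not identically `+∞`. -/
def ProperFn {X : Type*} (ψ : X → EReal) : Prop :=
  (∀ x, ψ x ≠ ⊥) ∧ ∃ x, ψ x ≠ ⊤

/-- Convexity for extended-real-valued functions. -/
def ConvexFnE {X : Type*} [AddCommMonoid X] [Module ℝ X] (ψ : X → EReal) : Prop :=
  ∀ x y : X, ∀ a b : ℝ, 0 ≤ a → 0 ≤ b → a + b = 1 →
    ψ (a • x + b • y) ≤ (a : EReal) * ψ x + (b : EReal) * ψ y

/-- The objective function defining the proximity operator `prox_{tψ}(z)`. -/
def proxObj {X : Type*} [NormedAddCommGroup X] (ψ : X → EReal) (t : ℝ) (z x : X) : EReal :=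
  (((1 / (2 * t)) * ‖x - z‖ ^ 2 : ℝ) : EReal) + ψ x

/-- `p` is the proximal point `prox_{tψ}(z)`, i.e. a (the) global minimizer of the
prox objective. -/
def IsProx {X : Type*} [NormedAddCommGroup X] (ψ : X → EReal) (t : ℝ) (z p : X) : Prop :=
  ∀ x, proxObj ψ t z p ≤ proxObj ψ t z x

/-- The convex subdifferential of an extended-real-valued function. -/
def subdiffE {X : Type*} [NormedAddCommGroup X] [InnerProductSpace ℝ X]
    (ψ : X → EReal) (x : X) : Set X :=
  {v | ∀ y, ψ x + ((inner ℝ v (y - x) : ℝ) : EReal) ≤ ψ y}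


/-!
The optimality condition of the prox problem says that `(z - p) / t` is a subgradient of `ψ`
at `p = prox_{tψ}(z)`: comparing `p` with the points `p + l • (x - p)` of the segment towards `x`
and letting `l → 0⁺`, the quadratic term of the objective disappears. Testing the two optimality
conditions at the other prox point and adding them, the inner products sum to `‖p₁ - p₂‖²`, so
`‖p₁ - p₂‖² ≤ t ((ψ₁ - ψ₂) p₂ - (ψ₁ - ψ₂) p₁) ≤ t L ‖p₁ - p₂‖`.
-/

open Filter Topology

lemma nonneg_of_forall_mem_Ioo_mul_add_sq_mul_nonneg {b c : ℝ}
    (h : ∀ l ∈ Set.Ioo (0 : ℝ) 1, 0 ≤ l * b + l ^ 2 * c) : 0 ≤ b := by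
  have hlim : Tendsto (fun l : ℝ => b + l * c) (𝓝[>] 0) (𝓝 b) := by
    have h0 : Tendsto (fun l : ℝ => b + l * c) (𝓝 0) (𝓝 (b + 0 * c)) :=
      tendsto_const_nhds.add (tendsto_id.mul tendsto_const_nhds)
    simpa using h0.mono_left nhdsWithin_le_nhds
  refine ge_of_tendsto hlim ?_
  filter_upwards [Ioo_mem_nhdsGT (zero_lt_one' ℝ)] with l hl
  have hl0 : 0 < l := hl.1
  have := h l hl
  nlinarith

lemma ConvexFnE.le_coe_toReal {X : Type*} [AddCommMonoid X] [Module ℝ X] {ψ : X → EReal}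
    (hconv : ConvexFnE ψ) (hbot : ∀ x, ψ x ≠ ⊥) {x y : X} (hx : ψ x ≠ ⊤) (hy : ψ y ≠ ⊤)
    {a b : ℝ} (ha : 0 ≤ a) (hb : 0 ≤ b) (hab : a + b = 1) :
    ψ (a • x + b • y) ≤ ((a * (ψ x).toReal + b * (ψ y).toReal : ℝ) : EReal) := by
  have h := hconv x y a b ha hb hab
  rwa [← EReal.coe_toReal hx (hbot x), ← EReal.coe_toReal hy (hbot y), ← EReal.coe_mul,
    ← EReal.coe_mul, ← EReal.coe_add] at h

namespace IsProx

variable {X : Type*} [NormedAddCommGroup X] {ψ : X → EReal} {t : ℝ} {z p : X}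

lemma ne_top (hproper : ProperFn ψ) (hp : IsProx ψ t z p) : ψ p ≠ ⊤ := by
  obtain ⟨hbot, x₀, hx₀⟩ := hproper
  intro hpt
  have h := hp x₀
  rw [proxObj, proxObj, hpt, ← EReal.coe_toReal hx₀ (hbot x₀), EReal.coe_add_top, top_le_iff,
    ← EReal.coe_add] at h
  exact EReal.coe_ne_top _ h

lemma toReal_le (hproper : ProperFn ψ) (hp : IsProx ψ t z p) {x : X} (hx : ψ x ≠ ⊤) :
    1 / (2 * t) * ‖p - z‖ ^ 2 + (ψ p).toReal ≤ 1 / (2 * t) * ‖x - z‖ ^ 2 + (ψ x).toReal := by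
  have h := hp x
  rwa [proxObj, proxObj, ← EReal.coe_toReal (hp.ne_top hproper) (hproper.1 p),
    ← EReal.coe_toReal hx (hproper.1 x), ← EReal.coe_add, ← EReal.coe_add,
    EReal.coe_le_coe_iff] at h

lemma inner_sub_le [InnerProductSpace ℝ X] (hproper : ProperFn ψ) (hconv : ConvexFnE ψ)
    (ht : 0 < t) (hp : IsProx ψ t z p) {x : X} (hx : ψ x ≠ ⊤) :
    inner ℝ (z - p) (x - p) ≤ t * ((ψ x).toReal - (ψ p).toReal) := by
  have hpfin := hp.ne_top hproper
  suffices h : 0 ≤ 1 / t * inner ℝ (p - z) (x - p) + ((ψ x).toReal - (ψ p).toReal) by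
    rw [← neg_sub, inner_neg_left]
    have := mul_le_mul_of_nonneg_left h ht.le
    field_simp at this
    linarith
  refine nonneg_of_forall_mem_Ioo_mul_add_sq_mul_nonneg (c := 1 / (2 * t) * ‖x - p‖ ^ 2) ?_
  rintro l ⟨hl0, hl1⟩
  have hseg : (1 - l) • p + l • x = p + l • (x - p) := by module
  have hconvex := hconv.le_coe_toReal hproper.1 hpfin hx (by linarith) hl0.le (sub_add_cancel 1 l)
  rw [hseg] at hconvex
  have hsegfin : ψ (p + l • (x - p)) ≠ ⊤ := ne_top_of_le_ne_top (EReal.coe_ne_top _) hconvex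
  have hconvex' := EReal.toReal_le_toReal hconvex (hproper.1 _) (EReal.coe_ne_top _)
  rw [EReal.toReal_coe] at hconvex'
  have hmin := hp.toReal_le hproper hsegfin
  have hexpand : ‖p + l • (x - p) - z‖ ^ 2 =
      ‖p - z‖ ^ 2 + 2 * l * inner ℝ (p - z) (x - p) + l ^ 2 * ‖x - p‖ ^ 2 := by
    rw [show p + l • (x - p) - z = (p - z) + l • (x - p) by abel, norm_add_sq_real,
      norm_smul, real_inner_smul_right, Real.norm_eq_abs, abs_of_pos hl0]
    ring
  rw [hexpand] at hmin
  field_simp at hmin ⊢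
  nlinarith

end IsProx

theorem stmt_4_general {X : Type*} [NormedAddCommGroup X] [InnerProductSpace ℝ X]
    (ψ₁ ψ₂ : X → EReal)
    (h₁proper : ProperFn ψ₁) (h₁conv : ConvexFnE ψ₁)
    (h₂proper : ProperFn ψ₂) (h₂conv : ConvexFnE ψ₂)
    (hdom : ∀ x : X, ψ₁ x ≠ ⊤ ↔ ψ₂ x ≠ ⊤)
    (L : ℝ) (hL : 0 ≤ L)
    (hlip : ∀ z₁ z₂ : X, ψ₁ z₁ ≠ ⊤ → ψ₁ z₂ ≠ ⊤ →
      |((ψ₁ z₁).toReal - (ψ₂ z₁).toReal) - ((ψ₁ z₂).toReal - (ψ₂ z₂).toReal)| ≤ L * ‖z₁ - z₂‖)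
    (z : X) (t : ℝ) (ht : 0 < t) (p₁ p₂ : X)
    (hp₁ : IsProx ψ₁ t z p₁) (hp₂ : IsProx ψ₂ t z p₂) :
    ‖p₁ - p₂‖ ≤ t * L := by
  have hp₁fin : ψ₁ p₁ ≠ ⊤ := hp₁.ne_top h₁proper
  have hp₂fin : ψ₁ p₂ ≠ ⊤ := (hdom p₂).mpr (hp₂.ne_top h₂proper)
  have h₁ := hp₁.inner_sub_le h₁proper h₁conv ht hp₂fin
  have h₂ := hp₂.inner_sub_le h₂proper h₂conv ht ((hdom p₁).mp hp₁fin)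
  have hsum : inner ℝ (z - p₁) (p₂ - p₁) + inner ℝ (z - p₂) (p₁ - p₂) = ‖p₁ - p₂‖ ^ 2 := by
    rw [← neg_sub p₁ p₂, inner_neg_right, neg_add_eq_sub, ← inner_sub_left,
      sub_sub_sub_cancel_left, real_inner_self_eq_norm_sq]
  have hdiff := (le_abs_self _).trans (hlip p₂ p₁ hp₂fin hp₁fin)
  rw [norm_sub_rev] at hdiff
  have hsq : ‖p₁ - p₂‖ ^ 2 ≤ t * L * ‖p₁ - p₂‖ := by nlinarith
  nlinarith [norm_nonneg (p₁ - p₂), mul_nonneg ht.le hL]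

theorem stmt_4 {X : Type*} [NormedAddCommGroup X] [InnerProductSpace ℝ X] [CompleteSpace X]
    (ψ₁ ψ₂ : X → EReal)
    (h₁proper : ProperFn ψ₁) (h₁conv : ConvexFnE ψ₁) (h₁closed : LowerSemicontinuous ψ₁)
    (h₂proper : ProperFn ψ₂) (h₂conv : ConvexFnE ψ₂) (h₂closed : LowerSemicontinuous ψ₂)
    (hdom : ∀ x : X, ψ₁ x ≠ ⊤ ↔ ψ₂ x ≠ ⊤)
    (L : ℝ) (hL : 0 ≤ L)
    (hlip : ∀ z₁ z₂ : X, ψ₁ z₁ ≠ ⊤ → ψ₁ z₂ ≠ ⊤ →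
      |((ψ₁ z₁).toReal - (ψ₂ z₁).toReal) - ((ψ₁ z₂).toReal - (ψ₂ z₂).toReal)| ≤ L * ‖z₁ - z₂‖)
    (z : X) (t : ℝ) (ht : 0 < t) (p₁ p₂ : X)
    (hp₁ : IsProx ψ₁ t z p₁) (hp₂ : IsProx ψ₂ t z p₂) :
    ‖p₁ - p₂‖ ≤ t * L :=
  stmt_4_general ψ₁ ψ₂ h₁proper h₁conv h₂proper h₂conv hdom L hL hlip z t ht p₁ p₂ hp₁ hp₂
end
end

section
/- Let X, Y be real Hilbert spaces, 𝔄 ⊂ Y nonempty, closed, convex and bounded with M_𝔄 := sup_{θ∈𝔄}‖θ‖. For i = 1, 2 let w_i(x) = D_i(x − u_i) + d_i with D_i ∈ L(X,Y), u_i ∈ X, d_i ∈ Y, and let Ψ_i(x) = φ(x) + σ_𝔄(w_i(x)), where φ : X → (−∞,+∞] is proper, closed, convex. Fix t > 0, z ∈ X and set p_i := prox_{tΨ_i}(z). Then ‖p₁ − p₂‖² / max{1, ‖p₁ − p₂‖} ≤ 2 t M_𝔄 ( ‖D₁ − D₂‖_{L(X,Y)} (1 + 2‖p₁ − u₁‖)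 + 2‖d₁ − d₂ − D₂(u₁ − u₂)‖_Y ). -/
noncomputable section

/-- The support function of a set `C` in a real Hilbert space. -/
def supportFn {Y : Type*} [NormedAddCommGroup Y] [InnerProductSpace ℝ Y]
    (C : Set Y) (y : Y) : ℝ :=
  sSup ((fun v => (inner ℝ v y : ℝ)) '' C)

/-! Let `g_i := σ_𝔄 ∘ w_i`. Comparing the prox objective of `Ψ_i` at its minimizer `p_i` with its
value at the midpoint `m` of `p₁, p₂`, convexity of `φ` and `g_i` bounds it by the averages at
`p₁, p₂`; adding the two inequalities, the parallelogram law leaves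
`‖p₁ - p₂‖² ≤ 2t ((g₁ - g₂)(p₂) - (g₁ - g₂)(p₁))`. Since `σ_𝔄` is `M`-Lipschitz,
`|g₁ - g₂|(x) ≤ M (‖D₁ - D₂‖ ‖x - u₁‖ + ‖d₁ - d₂ - D₂(u₁ - u₂)‖)`, and
`‖p₂ - u₁‖ ≤ ‖p₁ - u₁‖ + ‖p₁ - p₂‖` is where the factor `max 1 ‖p₁ - p₂‖` comes from. -/

open Set

section SupportFn

variable {Y : Type*} [NormedAddCommGroup Y] [InnerProductSpace ℝ Y] {𝔄 : Set Y} {M : ℝ}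

lemma supportFn_le (hne : 𝔄.Nonempty) {y : Y} {c : ℝ}
    (h : ∀ θ ∈ 𝔄, inner ℝ θ y ≤ c) : supportFn 𝔄 y ≤ c :=
  csSup_le (hne.image _) (by rintro _ ⟨θ, hθ, rfl⟩; exact h θ hθ)

lemma inner_le_mul_norm_of_norm_le {θ : Y} (hθ : ‖θ‖ ≤ M) (y : Y) : inner ℝ θ y ≤ M * ‖y‖ :=
  (real_inner_le_norm θ y).trans (mul_le_mul_of_nonneg_right hθ (norm_nonneg y))

lemma inner_le_supportFn (hM : ∀ θ ∈ 𝔄, ‖θ‖ ≤ M) {θ : Y} (hθ : θ ∈ 𝔄) (y : Y) :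
    inner ℝ θ y ≤ supportFn 𝔄 y :=
  le_csSup ⟨M * ‖y‖, by
    rintro _ ⟨θ', hθ', rfl⟩; exact inner_le_mul_norm_of_norm_le (hM θ' hθ') y⟩
    (mem_image_of_mem _ hθ)

lemma supportFn_le_add_mul_norm_sub (hne : 𝔄.Nonempty) (hM : ∀ θ ∈ 𝔄, ‖θ‖ ≤ M) (a b : Y) :
    supportFn 𝔄 a ≤ supportFn 𝔄 b + M * ‖a - b‖ := by
  refine supportFn_le hne fun θ hθ => ?_
  calc inner ℝ θ a = inner ℝ θ b + inner ℝ θ (a - b) := by rw [← inner_add_right, add_sub_cancel]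
    _ ≤ supportFn 𝔄 b + M * ‖a - b‖ :=
      add_le_add (inner_le_supportFn hM hθ b) (inner_le_mul_norm_of_norm_le (hM θ hθ) _)

lemma abs_supportFn_sub_le (hne : 𝔄.Nonempty) (hM : ∀ θ ∈ 𝔄, ‖θ‖ ≤ M) (a b : Y) :
    |supportFn 𝔄 a - supportFn 𝔄 b| ≤ M * ‖a - b‖ := by
  rw [abs_sub_le_iff]
  constructor
  · linarith [supportFn_le_add_mul_norm_sub hne hM a b]
  · rw [norm_sub_rev]; linarith [supportFn_le_add_mul_norm_sub hne hM b a]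

lemma convexOn_supportFn (hne : 𝔄.Nonempty) (hM : ∀ θ ∈ 𝔄, ‖θ‖ ≤ M) :
    ConvexOn ℝ univ (supportFn 𝔄) := by
  refine ⟨convex_univ, fun a _ b _ μ ν hμ hν _ => supportFn_le hne fun θ hθ => ?_⟩
  rw [inner_add_right, real_inner_smul_right, real_inner_smul_right, smul_eq_mul, smul_eq_mul]
  exact add_le_add (mul_le_mul_of_nonneg_left (inner_le_supportFn hM hθ a) hμ)
    (mul_le_mul_of_nonneg_left (inner_le_supportFn hM hθ b) hν)

end SupportFn

section Affine

variable {X Y : Type*} [NormedAddCommGroup X] [InnerProductSpace ℝ X]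
  [NormedAddCommGroup Y] [InnerProductSpace ℝ Y] {𝔄 : Set Y} {M : ℝ}

lemma convexOn_supportFn_comp_affine (hne : 𝔄.Nonempty) (hM : ∀ θ ∈ 𝔄, ‖θ‖ ≤ M)
    (D : X →L[ℝ] Y) (u : X) (d : Y) :
    ConvexOn ℝ univ fun x => supportFn 𝔄 (D (x - u) + d) :=
  (convexOn_supportFn hne hM).comp_affineMap
    ⟨fun x => D (x - u) + d, D.toLinearMap, fun x v => by
      simp only [vadd_eq_add, ContinuousLinearMap.coe_coe, map_sub, map_add]; abel⟩

lemma abs_supportFn_affine_sub_le (hne : 𝔄.Nonempty) (hM : ∀ θ ∈ 𝔄, ‖θ‖ ≤ M)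
    (D₁ D₂ : X →L[ℝ] Y) (u₁ u₂ : X) (d₁ d₂ : Y) (x : X) :
    |supportFn 𝔄 (D₁ (x - u₁) + d₁) - supportFn 𝔄 (D₂ (x - u₂) + d₂)| ≤
      M * (‖D₁ - D₂‖ * ‖x - u₁‖ + ‖d₁ - d₂ - D₂ (u₁ - u₂)‖) := by
  have hM0 : 0 ≤ M := (norm_nonneg _).trans (hM _ hne.some_mem)
  have hsplit : D₁ (x - u₁) + d₁ - (D₂ (x - u₂) + d₂) =
      (D₁ - D₂) (x - u₁) + (d₁ - d₂ - D₂ (u₁ - u₂)) := by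
    simp only [sub_apply, map_sub]; abel
  refine (abs_supportFn_sub_le hne hM _ _).trans (mul_le_mul_of_nonneg_left ?_ hM0)
  rw [hsplit]
  exact (norm_add_le _ _).trans (add_le_add_left ((D₁ - D₂).le_opNorm _) _)

end Affine

section Prox

variable {X : Type*} [NormedAddCommGroup X] {φ : X → EReal} {g : X → ℝ} {t : ℝ} {z p : X}

lemma IsProx.ne_top_s7 {ψ : X → EReal} (hp : IsProx ψ t z p) {x : X} (hx : ψ x ≠ ⊤) :
    ψ p ≠ ⊤ := by
  have h : proxObj ψ t z p ≠ ⊤ :=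
    ((hp x).trans_lt (EReal.add_lt_top (EReal.coe_ne_top _) hx).lt_top).ne
  unfold proxObj at h
  rwa [EReal.add_ne_top_iff_ne_top_right (EReal.coe_ne_bot _) (EReal.coe_ne_top _)] at h

lemma IsProx.ne_top_of_add_coe (hφ : ∃ x, φ x ≠ ⊤)
    (hp : IsProx (fun x => φ x + (g x : EReal)) t z p) : φ p ≠ ⊤ := by
  have hψ : ∀ x, φ x + (g x : EReal) ≠ ⊤ ↔ φ x ≠ ⊤ := fun x =>
    EReal.add_ne_top_iff_of_ne_bot_of_ne_top (EReal.coe_ne_bot _) (EReal.coe_ne_top _)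
  obtain ⟨x₀, hx₀⟩ := hφ
  exact (hψ p).1 (hp.ne_top_s7 ((hψ x₀).2 hx₀))

variable [InnerProductSpace ℝ X]

lemma midpoint_eq_half_smul_add_half_smul (x y : X) :
    midpoint ℝ x y = (1 / 2 : ℝ) • x + (1 / 2 : ℝ) • y := by
  rw [midpoint_eq_smul_add, smul_add, invOf_eq_inv, one_div]

lemma ConvexFnE.midpoint_le (hφ : ConvexFnE φ) {p₁ p₂ : X} {a₁ a₂ : ℝ}
    (h₁ : φ p₁ = a₁) (h₂ : φ p₂ = a₂) : φ (midpoint ℝ p₁ p₂) ≤ ((a₁ + a₂) / 2 : ℝ) := by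
  have h := hφ p₁ p₂ (1 / 2) (1 / 2) (by norm_num) (by norm_num) (by norm_num)
  rw [h₁, h₂, ← EReal.coe_mul, ← EReal.coe_mul, ← EReal.coe_add] at h
  rw [midpoint_eq_half_smul_add_half_smul]
  exact h.trans_eq (by norm_cast; ring)

lemma ConvexOn.midpoint_le (hg : ConvexOn ℝ univ g) (p₁ p₂ : X) :
    g (midpoint ℝ p₁ p₂) ≤ (g p₁ + g p₂) / 2 := by
  have h := hg.2 (mem_univ p₁) (mem_univ p₂) (by norm_num : (0 : ℝ) ≤ 1 / 2)
    (by norm_num : (0 : ℝ) ≤ 1 / 2) (by norm_num)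
  rw [midpoint_eq_half_smul_add_half_smul]
  simp only [smul_eq_mul] at h
  linarith

lemma IsProx.le_midpoint (hφ : ConvexFnE φ) (hg : ConvexOn ℝ univ g)
    (hp : IsProx (fun x => φ x + (g x : EReal)) t z p) {a : ℝ} (ha : φ p = a)
    {p₁ p₂ : X} {a₁ a₂ : ℝ} (h₁ : φ p₁ = a₁) (h₂ : φ p₂ = a₂) :
    1 / (2 * t) * ‖p - z‖ ^ 2 + a + g p ≤
      1 / (2 * t) * ‖midpoint ℝ p₁ p₂ - z‖ ^ 2 + (a₁ + a₂) / 2 + (g p₁ + g p₂) / 2 := by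
  have h := hp (midpoint ℝ p₁ p₂)
  simp only [proxObj, ha] at h
  have hmid := add_le_add (hφ.midpoint_le h₁ h₂) (EReal.coe_le_coe_iff.2 (hg.midpoint_le p₁ p₂))
  have h' := h.trans (add_le_add_right hmid _)
  simp only [← EReal.coe_add, EReal.coe_le_coe_iff] at h'
  linarith

theorem IsProx.norm_sub_sq_le {g₁ g₂ : X → ℝ} {p₁ p₂ : X} (hφ : ProperFn φ) (hφc : ConvexFnE φ)
    (hg₁ : ConvexOn ℝ univ g₁) (hg₂ : ConvexOn ℝ univ g₂) (ht : 0 < t)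
    (hp₁ : IsProx (fun x => φ x + (g₁ x : EReal)) t z p₁)
    (hp₂ : IsProx (fun x => φ x + (g₂ x : EReal)) t z p₂) :
    ‖p₁ - p₂‖ ^ 2 ≤ 2 * t * (g₁ p₂ - g₂ p₂ + (g₂ p₁ - g₁ p₁)) := by
  obtain ⟨hne_bot, hne_top⟩ := hφ
  have h₁ := (EReal.coe_toReal (hp₁.ne_top_of_add_coe hne_top) (hne_bot p₁)).symm
  have h₂ := (EReal.coe_toReal (hp₂.ne_top_of_add_coe hne_top) (hne_bot p₂)).symm
  have hA := hp₁.le_midpoint hφc hg₁ h₁ h₁ h₂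
  have hB := hp₂.le_midpoint hφc hg₂ h₂ h₁ h₂
  have hApollonius :=
    EuclideanGeometry.dist_sq_add_dist_sq_eq_two_mul_dist_midpoint_sq_add_half_dist_sq z p₁ p₂
  simp only [dist_comm z, dist_eq_norm] at hApollonius
  have key : 1 / (2 * t) * ‖p₁ - p₂‖ ^ 2 ≤ g₁ p₂ - g₂ p₂ + (g₂ p₁ - g₁ p₁) := by
    linarith [congrArg (1 / (2 * t) * ·) hApollonius]
  rwa [one_div_mul_eq_div, div_le_iff₀' (by positivity)] at key

end Prox

lemma sq_div_max_one_le {δ r s A B C : ℝ} (hr : 0 ≤ r) (hA : 0 ≤ A) (hB : 0 ≤ B)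
    (hC : 0 ≤ C) (hs : s ≤ r + δ) (h : δ ^ 2 ≤ C * (A * (r + s) + B)) :
    δ ^ 2 / max 1 δ ≤ C * (A * (1 + 2 * r) + B) := by
  have hK1 : 1 ≤ max 1 δ := le_max_left _ _
  have hKδ : δ ≤ max 1 δ := le_max_right _ _
  rw [div_le_iff₀ (by linarith)]
  refine h.trans ?_
  have hs' : A * s ≤ A * (r + max 1 δ) := mul_le_mul_of_nonneg_left (by linarith) hA
  have hr' : 0 ≤ (max 1 δ - 1) * (2 * A * r + B) := by
    have := mul_nonneg hA hr
    nlinarith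
  nlinarith

theorem stmt_7_general {X Y : Type*} [NormedAddCommGroup X] [InnerProductSpace ℝ X]
    [NormedAddCommGroup Y] [InnerProductSpace ℝ Y]
    (𝔄 : Set Y) (M : ℝ)
    (hne : 𝔄.Nonempty)
    (hM : ∀ θ ∈ 𝔄, ‖θ‖ ≤ M)
    (φ : X → EReal) (hproper : ProperFn φ) (hconv : ConvexFnE φ)
    (D₁ D₂ : X →L[ℝ] Y) (u₁ u₂ : X) (d₁ d₂ : Y)
    (t : ℝ) (ht : 0 < t) (z p₁ p₂ : X)
    (hp₁ : IsProx (fun x => φ x + ((supportFn 𝔄 (D₁ (x - u₁) + d₁) : ℝ) : EReal)) t z p₁)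
    (hp₂ : IsProx (fun x => φ x + ((supportFn 𝔄 (D₂ (x - u₂) + d₂) : ℝ) : EReal)) t z p₂) :
    ‖p₁ - p₂‖ ^ 2 / max 1 ‖p₁ - p₂‖ ≤
      2 * t * M * (‖D₁ - D₂‖ * (1 + 2 * ‖p₁ - u₁‖) + 2 * ‖d₁ - d₂ - D₂ (u₁ - u₂)‖) := by
  have hM0 : 0 ≤ M := (norm_nonneg _).trans (hM _ hne.some_mem)
  have hstab := IsProx.norm_sub_sq_le hproper hconv
    (convexOn_supportFn_comp_affine hne hM D₁ u₁ d₁)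
    (convexOn_supportFn_comp_affine hne hM D₂ u₂ d₂) ht hp₁ hp₂
  have hdiff₁ := abs_supportFn_affine_sub_le hne hM D₁ D₂ u₁ u₂ d₁ d₂ p₁
  have hdiff₂ := abs_supportFn_affine_sub_le hne hM D₁ D₂ u₁ u₂ d₁ d₂ p₂
  have hp₂u₁ : ‖p₂ - u₁‖ ≤ ‖p₁ - u₁‖ + ‖p₁ - p₂‖ := by
    rw [add_comm, norm_sub_rev p₁]; exact norm_sub_le_norm_sub_add_norm_sub p₂ p₁ u₁
  have hbound : ‖p₁ - p₂‖ ^ 2 ≤ 2 * t * M *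
      (‖D₁ - D₂‖ * (‖p₁ - u₁‖ + ‖p₂ - u₁‖) + 2 * ‖d₁ - d₂ - D₂ (u₁ - u₂)‖) := by
    refine hstab.trans ?_
    rw [mul_assoc _ M]
    gcongr
    linarith [le_abs_self (supportFn 𝔄 (D₁ (p₂ - u₁) + d₁) - supportFn 𝔄 (D₂ (p₂ - u₂) + d₂)),
      neg_abs_le (supportFn 𝔄 (D₁ (p₁ - u₁) + d₁) - supportFn 𝔄 (D₂ (p₁ - u₂) + d₂))]
  exact sq_div_max_one_le (norm_nonneg _) (norm_nonneg _) (by positivity) (by positivity) hp₂u₁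
    hbound

theorem stmt_7 {X Y : Type*} [NormedAddCommGroup X] [InnerProductSpace ℝ X] [CompleteSpace X]
    [NormedAddCommGroup Y] [InnerProductSpace ℝ Y] [CompleteSpace Y]
    (𝔄 : Set Y) (M : ℝ)
    (hne : 𝔄.Nonempty) (hclosed : IsClosed 𝔄) (hconvA : Convex ℝ 𝔄)
    (hM : ∀ θ ∈ 𝔄, ‖θ‖ ≤ M)
    (φ : X → EReal) (hproper : ProperFn φ) (hconv : ConvexFnE φ)
    (hlsc : LowerSemicontinuous φ)
    (D₁ D₂ : X →L[ℝ] Y) (u₁ u₂ : X) (d₁ d₂ : Y)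
    (t : ℝ) (ht : 0 < t) (z p₁ p₂ : X)
    (hp₁ : IsProx (fun x => φ x + ((supportFn 𝔄 (D₁ (x - u₁) + d₁) : ℝ) : EReal)) t z p₁)
    (hp₂ : IsProx (fun x => φ x + ((supportFn 𝔄 (D₂ (x - u₂) + d₂) : ℝ) : EReal)) t z p₂) :
    ‖p₁ - p₂‖ ^ 2 / max 1 ‖p₁ - p₂‖ ≤
      2 * t * M * (‖D₁ - D₂‖ * (1 + 2 * ‖p₁ - u₁‖) + 2 * ‖d₁ - d₂ - D₂ (u₁ - u₂)‖) :=
  stmt_7_general 𝔄 M hne hM φ hproper hconv D₁ D₂ u₁ u₂ d₁ d₂ t ht z p₁ p₂ hp₁ hp₂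
end
end
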